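/- Let G be a finite group and P a p-subgroup. Then C_G(P) has characteristic p if and only if N_G(P) has characteristic p. -/

import Mathlib

/-!
`C = C_G(P)` is normal in `N = N_G(P)`, and `P ≤ O_p(N)` gives `C_N(O_p(N)) ≤ C`. So the theorem
reduces to two facts about a normal subgroup `K` of a finite group `H`, both resting on
`O_p(K) = K ∩ O_p(H)`. If `K` has characteristic `p` and `C_H(O_p(H)) ≤ K`, then
`C_H(O_p(H)) ≤ C_K(O_p(K)) ≤ O_p(K) ≤ O_p(H)`. If `H` has characteristic `p`, then
`X = C_K(O_p(K))` is normal in `H` and is a `p`-group: for a `p'`-element `y ∈ X` and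
`g ∈ O_p(H)`, the commutator `[y, g]` lies in `K ∩ O_p(H)`, so it commutes with `y`, whence
`[y, g]^m = [y^m, g] = 1` for some `m` prime to `p`; thus `[y, g] = 1`,
`y ∈ C_H(O_p(H)) ≤ O_p(H)` and `y = 1`.
-/

/-- The largest normal `p`-subgroup `O_p(G)`: the join of all normal `p`-subgroups. -/
def pCore (p : ℕ) (G : Type*) [Group G] : Subgroup G :=
  ⨆ (N : Subgroup G) (_ : N.Normal) (_ : IsPGroup p N), N

/-- A group `G` has characteristic `p` if `C_G(O_p(G)) ≤ O_p(G)`. -/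
def HasCharP (p : ℕ) (G : Type*) [Group G] : Prop :=
  Subgroup.centralizer (pCore p G : Set G) ≤ pCore p G

/-- An element is `p`-central if it has order `p` and lies in the center of some
Sylow `p`-subgroup of `G`. -/
def IsPCentral (p : ℕ) {G : Type*} [Group G] (x : G) : Prop :=
  orderOf x = p ∧ ∃ S : Sylow p G,
    x ∈ (S : Subgroup G) ⊓ Subgroup.centralizer ((S : Subgroup G) : Set G)

/-- A `p`-subgroup `P` is `p`-centric if `Z(P) = P ⊓ C_G(P)` is a Sylow `p`-subgroup of
`C_G(P)`, expressed via maximality among `p`-subgroups of `C_G(P)`. -/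
def IsPCentric (p : ℕ) {G : Type*} [Group G] (P : Subgroup G) : Prop :=
  ∀ Q : Subgroup G, Q ≤ Subgroup.centralizer (P : Set G) → IsPGroup p Q →
    P ⊓ Subgroup.centralizer (P : Set G) ≤ Q →
    Q = P ⊓ Subgroup.centralizer (P : Set G)

/-- The step `P ↦ O_p(N_G(P))`, viewed as a subgroup of `G`. -/
def pRadicalStep (p : ℕ) {G : Type*} [Group G] (P : Subgroup G) : Subgroup G :=
  (pCore p ↥(Subgroup.normalizer (P : Set G))).map (Subgroup.normalizer (P : Set G)).subtype

/-- The chain `P₀ = Q`, `P_{i+1} = O_p(N_G(P_i))`. -/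
def radChain (p : ℕ) {G : Type*} [Group G] (Q : Subgroup G) : ℕ → Subgroup G
  | 0 => Q
  | n + 1 => pRadicalStep p (radChain p Q n)

/-- `G` has local characteristic `p`: every `p`-local subgroup has characteristic `p`. -/
def LocalCharP (p : ℕ) (G : Type*) [Group G] : Prop :=
  ∀ P : Subgroup G, P ≠ ⊥ → IsPGroup p P → HasCharP p ↥(Subgroup.normalizer (P : Set G))

/-- `G` has parabolic characteristic `p`: every `p`-local subgroup containing a Sylow
`p`-subgroup of `G` has characteristic `p`. -/
def ParabolicCharP (p : ℕ) (G : Type*) [Group G] : Prop :=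
  ∀ P : Subgroup G, P ≠ ⊥ → IsPGroup p P →
    (∃ S : Sylow p G, (S : Subgroup G) ≤ Subgroup.normalizer (P : Set G)) → HasCharP p ↥(Subgroup.normalizer (P : Set G))

section PCore

variable {p : ℕ} {G G' : Type*} [Group G] [Group G']

theorem le_pCore {N : Subgroup G} [hN : N.Normal] (hp : IsPGroup p N) : N ≤ pCore p G :=
  le_iSup_of_le N <| le_iSup_of_le hN <| le_iSup_of_le hp le_rfl

theorem pCore_le {K : Subgroup G} (h : ∀ N : Subgroup G, N.Normal → IsPGroup p N → N ≤ K) :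
    pCore p G ≤ K :=
  iSup_le fun N => iSup_le fun hN => iSup_le fun hp => h N hN hp

theorem map_pCore_le (e : G ≃* G') : (pCore p G).map e.toMonoidHom ≤ pCore p G' := by
  refine Subgroup.map_le_iff_le_comap.mpr <| pCore_le fun N hN hp => ?_
  have := hN.map e.toMonoidHom e.surjective
  exact Subgroup.map_le_iff_le_comap.mp <| le_pCore (hp.map e.toMonoidHom)

instance pCore_characteristic : (pCore p G).Characteristic :=
  Subgroup.characteristic_iff_map_le.mpr fun e => map_pCore_le e

theorem isPGroup_pCore [Finite G] [Fact p.Prime] : IsPGroup p (pCore p G) :=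
  have S : Sylow p G := Classical.arbitrary _
  S.isPGroup'.to_le <| pCore_le fun _ _ hp => hp.le_sylow_of_normal S

theorem HasCharP.of_mulEquiv (e : G ≃* G') (h : HasCharP p G) : HasCharP p G' := by
  intro z hz
  have hz' : e.symm z ∈ Subgroup.centralizer (pCore p G : Set G) :=
    Subgroup.mem_centralizer_iff.mpr fun g hg => e.injective <| by
      simpa using Subgroup.mem_centralizer_iff.mp hz (e g) (map_pCore_le e ⟨g, hg, rfl⟩)
  simpa using map_pCore_le e ⟨_, h hz', rfl⟩

theorem hasCharP_congr (e : G ≃* G') : HasCharP p G ↔ HasCharP p G' :=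
  ⟨.of_mulEquiv e, .of_mulEquiv e.symm⟩

end PCore

section CoprimeElements

open scoped commutatorElement

variable {p : ℕ} {G : Type*} [Group G]

theorem commutatorElement_pow_left_of_commute {y g : G} (h : Commute ⁅y, g⁆ y) (n : ℕ) :
    ⁅y ^ n, g⁆ = ⁅y, g⁆ ^ n := by
  induction n with
  | zero => simp
  | succ n ih =>
    rw [pow_succ', commutatorElement_mul_left_eq_conj_mul, ih, (h.symm.pow_right n).eq,
      mul_inv_cancel_right, pow_succ]

theorem IsPGroup.eq_one_of_pow_eq_one {H : Subgroup G} (hH : IsPGroup p H) {g : G} (hgH : g ∈ H)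
    {m : ℕ} (hm : p.Coprime m) (hg : g ^ m = 1) : g = 1 := by
  have hcop := hH.orderOf_coprime hm ⟨g, hgH⟩
  rw [Subgroup.orderOf_mk] at hcop
  exact orderOf_eq_one_iff.mp <| hcop.eq_one_of_dvd (orderOf_dvd_of_pow_eq_one hg)

theorem IsPGroup.of_forall_pow_eq_one [Finite G] [hp : Fact p.Prime]
    (h : ∀ g : G, ∀ m : ℕ, p.Coprime m → g ^ m = 1 → g = 1) : IsPGroup p G := by
  intro g
  have hn : orderOf g ≠ 0 := (orderOf_pos g).ne'
  refine ⟨(orderOf g).factorization p, h _ _ (Nat.coprime_ordCompl hp.out hn) ?_⟩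
  rw [← pow_mul, Nat.ordProj_mul_ordCompl_eq_self, pow_orderOf_eq_one]

open Subgroup in
theorem mem_centralizer_of_pow_eq_one {O K : Subgroup G} [O.Normal] [K.Normal] (hO : IsPGroup p O)
    {y : G} (hyK : y ∈ K) (hyC : y ∈ centralizer ((K ⊓ O : Subgroup G) : Set G)) {m : ℕ}
    (hm : p.Coprime m) (hy : y ^ m = 1) : y ∈ centralizer (O : Set G) := by
  refine mem_centralizer_iff.mpr fun g hg => ?_
  have hc : ⁅y, g⁆ ∈ K ⊓ O := commutator_le_inf K O (commutator_mem_commutator hyK hg)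
  have hcomm : Commute ⁅y, g⁆ y := mem_centralizer_iff.mp hyC _ hc
  have hc1 : ⁅y, g⁆ = 1 := hO.eq_one_of_pow_eq_one hc.2 hm <| by
    rw [← commutatorElement_pow_left_of_commute hcomm, hy, commutatorElement_one_left]
  exact (commutatorElement_eq_one_iff_mul_comm.mp hc1).symm

end CoprimeElements

section NormalSubgroup

open Subgroup

variable {p : ℕ} {G : Type*} [Group G]

theorem centralizer_subgroupOf (H K : Subgroup G) :
    centralizer ((H.subgroupOf K : Subgroup K) : Set K) =
      (centralizer ((K ⊓ H : Subgroup G) : Set G)).subgroupOf K := by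
  ext x
  simp [mem_centralizer_iff, mem_subgroupOf, Subtype.ext_iff]

variable [Finite G] [Fact p.Prime] {K : Subgroup G} [K.Normal]

theorem pCore_eq_subgroupOf : pCore p K = (pCore p G).subgroupOf K := by
  refine le_antisymm ?_ (le_pCore isPGroup_pCore.comap_subtype)
  rw [subgroupOf, ← map_le_iff_le_comap]
  exact le_pCore (isPGroup_pCore.map _)

theorem hasCharP_iff_of_normal :
    HasCharP p K ↔ K ⊓ centralizer ((K ⊓ pCore p G : Subgroup G) : Set G) ≤ pCore p G := by
  rw [HasCharP, pCore_eq_subgroupOf, centralizer_subgroupOf]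
  exact ⟨fun h x ⟨hxK, hx⟩ => h (x := ⟨x, hxK⟩) hx, fun h x hx => h ⟨x.2, hx⟩⟩

theorem HasCharP.of_subgroup_of_normal (hK : HasCharP p K)
    (hC : centralizer (pCore p G : Set G) ≤ K) : HasCharP p G := fun _ hx =>
  hasCharP_iff_of_normal.mp hK ⟨hC hx, centralizer_le inf_le_right hx⟩

theorem HasCharP.subgroup_of_normal (h : HasCharP p G) : HasCharP p K := by
  rw [hasCharP_iff_of_normal]
  refine le_pCore <| .of_forall_pow_eq_one fun ⟨y, hyK, hyC⟩ m hm hy => Subtype.ext ?_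
  replace hy : y ^ m = 1 := congrArg Subtype.val hy
  exact isPGroup_pCore.eq_one_of_pow_eq_one
    (h (mem_centralizer_of_pow_eq_one isPGroup_pCore hyK hyC hm hy)) hm hy

end NormalSubgroup

open Subgroup in
theorem centralizer_pCore_normalizer_le {p : ℕ} {G : Type*} [Group G] {P : Subgroup G}
    (hP : IsPGroup p P) :
    centralizer (pCore p (normalizer (P : Set G)) : Set (normalizer (P : Set G))) ≤
      (centralizer (P : Set G)).subgroupOf (normalizer (P : Set G)) := by
  have hP' : P.subgroupOf (normalizer (P : Set G)) ≤ pCore p _ := le_pCore hP.comap_subtype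
  refine fun x hx => mem_centralizer_iff.mpr fun q hq => ?_
  exact congrArg Subtype.val (mem_centralizer_iff.mp hx ⟨q, le_normalizer hq⟩ (hP' hq))

/-- `C_G(P)` has characteristic `p` if and only if `N_G(P)` has characteristic `p`. -/
theorem stmt4 (p : ℕ) [Fact p.Prime] (G : Type*) [Group G] [Finite G]
    (P : Subgroup G) (hP : IsPGroup p P) :
    HasCharP p ↥(Subgroup.centralizer (P : Set G)) ↔ HasCharP p ↥(Subgroup.normalizer (P : Set G)) := by
  rw [hasCharP_congr (Subgroup.subgroupOfEquivOfLe (Subgroup.centralizer_le_normalizer _)).symm]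
  exact ⟨fun h => h.of_subgroup_of_normal (centralizer_pCore_normalizer_le hP),
    fun h => h.subgroup_of_normal⟩
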